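/- Let V be a 2-dimensional oriented real inner product space with complex structure J (rotation by π/2), and N a real inner product space. Suppose h : Sym²(V) → N is symmetric bilinear with trace zero (h(e₁,e₁) + h(e₂,e₂) = 0 for an orthonormal basis (e₁,e₂)). If Ĵ : N → N is an orthogonal complex structure and R₁₂ : N → N is the skew endomorphism determined by the Ricci equation ⟨R₁₂ ξ, ζ⟩ = 2(⟨h(e₁,e₁),ζ⟩⟨h(e₁,e₂),ξ⟩ − ⟨h(e₁,e₁),ξ⟩⟨h(e₁,e₂),ζ⟩) appropriately extended, and if h(e₁,e₁) = κ₁ n₃ + κ₂ n₄, h(e₁,e₂) = −κ₂ n₃ + κ₁ n₄ for an orthonormal basis (n₃,n₄,n₅,n₆) of N with Ĵn₃ = n₄, Ĵn₅ = −n₆, then the operator B(ξ) := Σ_{i,j} ⟨h(eᵢ,eⱼ), ξ⟩ h(eᵢ,eⱼ) satisfies B(ξ) = Ĵ R₁₂ ξ for all ξ ∈ N, where R₁₂ n₃ = −2|κ|² Ĵn₃, R₁₂ n₄ = −2|κ|² Ĵn₄, R₁₂ n₅ = R₁₂ n₆ = 0 and |κ|² = κ₁² + κ₂². -/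

import Mathlib

/-!
The trace-free symmetric form `h` contributes `2(⟪h₁₁, ξ⟫h₁₁ + ⟪h₁₂, ξ⟫h₁₂)` to the Simons
operator, and since `h₁₂` is `h₁₁` rotated by a right angle in the plane `⟨n₃, n₄⟩`, this is
`2|κ|²` times the orthogonal projection onto that plane. Because `Ĵ² = -1`, the prescribed
values of `R₁₂` make `Ĵ R₁₂` the same multiple of the same projection on the orthonormal
basis `n₃, …, n₆`, hence everywhere.
-/

open scoped RealInnerProductSpace

theorem OrthonormalBasis.map_eq_sum_inner_smul {ι 𝕜 E F : Type*} [Fintype ι] [RCLike 𝕜]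
    [NormedAddCommGroup E] [InnerProductSpace 𝕜 E] [AddCommGroup F] [Module 𝕜 F]
    (b : OrthonormalBasis ι 𝕜 E) (T : E →ₗ[𝕜] F) (x : E) :
    T x = ∑ i, inner 𝕜 (b i) x • T (b i) := by
  conv_lhs => rw [← b.sum_repr' x]
  simp only [map_sum, map_smul]

section

variable {E : Type*} [NormedAddCommGroup E] [InnerProductSpace ℝ E]

theorem sum_inner_smul_of_traceless_symm (h : Fin 2 → Fin 2 → E) (h10 : h 1 0 = h 0 1)
    (h11 : h 1 1 = -h 0 0) (ξ : E) :
    ∑ i, ∑ j, ⟪h i j, ξ⟫ • h i j = (2 : ℝ) • (⟪h 0 0, ξ⟫ • h 0 0 + ⟪h 0 1, ξ⟫ • h 0 1) := by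
  simp only [Fin.sum_univ_two, h10, h11, inner_neg_left, neg_smul, smul_neg, neg_neg]
  module

theorem inner_smul_add_inner_smul_rotate (κ₁ κ₂ : ℝ) (u v ξ : E) :
    ⟪κ₁ • u + κ₂ • v, ξ⟫ • (κ₁ • u + κ₂ • v) + ⟪(-κ₂) • u + κ₁ • v, ξ⟫ • ((-κ₂) • u + κ₁ • v) =
      (κ₁ ^ 2 + κ₂ ^ 2) • (⟪u, ξ⟫ • u + ⟪v, ξ⟫ • v) := by
  simp only [inner_add_left, real_inner_smul_left]
  module

theorem Submodule.top_le_span_range_vecCons_four {R M : Type*} [Semiring R] [AddCommMonoid M]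
    [Module R M] {a b c d : M} (hspan : Submodule.span R {a, b, c, d} = ⊤) :
    ⊤ ≤ Submodule.span R (Set.range ![a, b, c, d]) := by
  rw [Matrix.range_cons, Matrix.range_cons, Matrix.range_cons, Matrix.range_cons,
    Matrix.range_empty]
  simp only [Set.union_empty, Set.singleton_union]
  rw [hspan]

end

theorem simons_operator_eq_J_curvature_general
    {N : Type*} [NormedAddCommGroup N] [InnerProductSpace ℝ N]
    (n₃ n₄ n₅ n₆ : N)
    (hON : Orthonormal ℝ ![n₃, n₄, n₅, n₆])
    (hspan : Submodule.span ℝ {n₃, n₄, n₅, n₆} = ⊤)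
    (Jhat R₁₂ : N →ₗ[ℝ] N)
    (hJsq : ∀ ξ, Jhat (Jhat ξ) = -ξ)
    (κ₁ κ₂ : ℝ) (h : Fin 2 → Fin 2 → N)
    (h00 : h 0 0 = κ₁ • n₃ + κ₂ • n₄)
    (h01 : h 0 1 = (-κ₂) • n₃ + κ₁ • n₄)
    (h10 : h 1 0 = h 0 1)
    (h11 : h 1 1 = - h 0 0)
    (hR3 : R₁₂ n₃ = (-2 * (κ₁ ^ 2 + κ₂ ^ 2)) • Jhat n₃)
    (hR4 : R₁₂ n₄ = (-2 * (κ₁ ^ 2 + κ₂ ^ 2)) • Jhat n₄)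
    (hR5 : R₁₂ n₅ = 0) (hR6 : R₁₂ n₆ = 0) :
    ∀ ξ : N, (∑ i : Fin 2, ∑ j : Fin 2, ⟪h i j, ξ⟫ • h i j) = Jhat (R₁₂ ξ) := by
  intro ξ
  let b := OrthonormalBasis.mk hON (Submodule.top_le_span_range_vecCons_four hspan)
  have hJR : ∀ n, R₁₂ n = (-2 * (κ₁ ^ 2 + κ₂ ^ 2)) • Jhat n →
      Jhat (R₁₂ n) = (2 * (κ₁ ^ 2 + κ₂ ^ 2)) • n := by
    intro n hn
    rw [hn, map_smul, hJsq]
    module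
  calc ∑ i, ∑ j, ⟪h i j, ξ⟫ • h i j
      = (2 : ℝ) • (⟪h 0 0, ξ⟫ • h 0 0 + ⟪h 0 1, ξ⟫ • h 0 1) :=
        sum_inner_smul_of_traceless_symm h h10 h11 ξ
    _ = (2 * (κ₁ ^ 2 + κ₂ ^ 2)) • (⟪n₃, ξ⟫ • n₃ + ⟪n₄, ξ⟫ • n₄) := by
        rw [h00, h01, inner_smul_add_inner_smul_rotate, smul_smul]
    _ = ∑ i, ⟪b i, ξ⟫ • Jhat (R₁₂ (b i)) := by
        simp only [b, OrthonormalBasis.coe_mk, Fin.sum_univ_four, Matrix.cons_val,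
          hJR n₃ hR3, hJR n₄ hR4, hR5, hR6, map_zero, smul_zero, add_zero]
        module
    _ = Jhat (R₁₂ ξ) := (b.map_eq_sum_inner_smul (Jhat ∘ₗ R₁₂) ξ).symm

/-- Pointwise linear-algebra content of Proposition 4.3: with the second
fundamental form h of a null-torsion holomorphic curve in a T²-adapted frame,
h(e₁,e₁) = κ₁n₃ + κ₂n₄, h(e₁,e₂) = −κ₂n₃ + κ₁n₄, h(e₂,e₂) = −h(e₁,e₁),
with Ĵ the orthogonal complex structure with Ĵn₃ = n₄, Ĵn₅ = −n₆, and with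
R₁₂ determined by R₁₂n₃ = −2|κ|²Ĵn₃, R₁₂n₄ = −2|κ|²Ĵn₄, R₁₂n₅ = R₁₂n₆ = 0
(the Ricci equation), the Simons operator
B(ξ) = Σ_{i,j}⟨h(eᵢ,eⱼ),ξ⟩h(eᵢ,eⱼ) satisfies B(ξ) = Ĵ R₁₂ ξ for all ξ ∈ N. -/
theorem simons_operator_eq_J_curvature
    {N : Type*} [NormedAddCommGroup N] [InnerProductSpace ℝ N]
    (n₃ n₄ n₅ n₆ : N)
    (hON : Orthonormal ℝ ![n₃, n₄, n₅, n₆])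
    (hspan : Submodule.span ℝ {n₃, n₄, n₅, n₆} = ⊤)
    (Jhat R₁₂ : N →ₗ[ℝ] N)
    (hJsq : ∀ ξ, Jhat (Jhat ξ) = -ξ)
    (hJiso : ∀ ξ ζ, ⟪Jhat ξ, Jhat ζ⟫ = ⟪ξ, ζ⟫)
    (hJ3 : Jhat n₃ = n₄) (hJ5 : Jhat n₅ = -n₆)
    (κ₁ κ₂ : ℝ) (h : Fin 2 → Fin 2 → N)
    (h00 : h 0 0 = κ₁ • n₃ + κ₂ • n₄)
    (h01 : h 0 1 = (-κ₂) • n₃ + κ₁ • n₄)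
    (h10 : h 1 0 = h 0 1)
    (h11 : h 1 1 = - h 0 0)
    (hR3 : R₁₂ n₃ = (-2 * (κ₁ ^ 2 + κ₂ ^ 2)) • Jhat n₃)
    (hR4 : R₁₂ n₄ = (-2 * (κ₁ ^ 2 + κ₂ ^ 2)) • Jhat n₄)
    (hR5 : R₁₂ n₅ = 0) (hR6 : R₁₂ n₆ = 0) :
    ∀ ξ : N, (∑ i : Fin 2, ∑ j : Fin 2, ⟪h i j, ξ⟫ • h i j) = Jhat (R₁₂ ξ) :=
  simons_operator_eq_J_curvature_general n₃ n₄ n₅ n₆ hON hspan Jhat R₁₂ hJsq κ₁ κ₂ h h00 h01 h10 h11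
    hR3 hR4 hR5 hR6
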